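/- arXiv:1812.01142 — 8 statements merged into one kernel-verified Lean document; each statement's English description precedes it below -/
import Mathlib

section
/- For every field F, all integers d ≥ 1 and 1 ≤ m ≤ d, and every vector ψ ∈ F^d, the rank of the repair-encoder matrix Ξ^{ψ,m} is at most the binomial coefficient C(d−1, m−1). -/
/-!
Read as a map `Λ^{m-1} F^d → Λ^m F^d`, `Ξ^{ψ,m}` is `ω ↦ ψ ∧ ω`. Since `ψ ∧ ψ = 0`, for every
`(m+1)`-set `T` the rows satisfy `∑_{x ∈ T} ± ψ_x · row(T ∖ {x}) = 0`. If `ψ_v ≠ 0`, taking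
`T = I ∪ {v}` writes every row `I ∌ v` through rows indexed by sets containing `v`, so the rank is
at most the number `C(d-1, m-1)` of those. If `ψ` vanishes on `{1,…,d}`, then `Ξ^{ψ,m} = 0`.
-/

/-- `ind S x = |{y ∈ S : y ≤ x}|`. -/
def ind (S : Finset ℕ) (x : ℕ) : ℕ := (S.filter (fun y => y ≤ x)).card

/-- The repair-encoder matrix `Ξ^{ψ,m}`: rows indexed by `m`-element subsets `I` of `{1,…,d}`,
columns indexed by `(m-1)`-element subsets `J` of `{1,…,d}`; entry `(-1)^{ind(I,x)} ψ_x`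
if `I = J ∪ {x}` (with `x ∉ J`), and `0` otherwise. -/
def Xi (F : Type*) [Field F] (d m : ℕ) (ψ : ℕ → F) :
    Matrix ↥((Finset.Icc 1 d).powersetCard m) ↥((Finset.Icc 1 d).powersetCard (m - 1)) F :=
  fun I J => ∑ x ∈ I.val \ J.val,
    if I.val = insert x J.val then (-1 : F) ^ (ind I.val x) * ψ x else 0

open Finset

theorem Matrix.rank_le_card_of_forall_row_mem_span {m n R : Type*} [Field R] [Finite m]
    [Fintype n] (A : Matrix m n R) (s : Set m) [Fintype s]
    (h : ∀ i, A.row i ∈ Submodule.span R (A.row '' s)) :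
    A.rank ≤ Fintype.card s := by
  rw [Set.image_eq_range] at h
  rw [A.rank_eq_finrank_span_row]
  exact (Submodule.finrank_mono (Submodule.span_le.mpr (Set.range_subset_iff.mpr h))).trans
    (finrank_range_le_card _)

namespace Finset

variable {α : Type*} [DecidableEq α] {s I : Finset α} {n : ℕ} {v x : α}

theorem erase_insert_mem_powersetCard (hI : I ∈ s.powersetCard n) (hv : v ∈ s) (hvI : v ∉ I)
    (hx : x ∈ I) : (insert v I).erase x ∈ s.powersetCard n := by
  rw [mem_powersetCard] at hI ⊢
  refine ⟨(erase_subset _ _).trans (insert_subset hv hI.1), ?_⟩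
  rw [card_erase_of_mem (mem_insert_of_mem hx), card_insert_of_notMem hvI, hI.2,
    Nat.add_sub_cancel]

theorem card_powersetCard_subtype_mem (hv : v ∈ s) (hn : 1 ≤ n) :
    Fintype.card {I : s.powersetCard n // v ∈ I.1} = (#s - 1).choose (n - 1) := by
  rw [Fintype.card_subtype, ← card_map (Function.Embedding.subtype _)]
  convert card_filter_powersetCard_subset {v} s n (singleton_subset_iff.mpr hv)
    (by simpa using hn) using 2
  · ext A
    simp [and_comm]
  all_goals simp

end Finset

theorem ind_erase_add_one {T : Finset ℕ} {a b : ℕ} (ha : a ∈ T) (hab : a ≤ b) :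
    ind (T.erase a) b + 1 = ind T b := by
  rw [ind, ind, filter_erase]
  exact card_erase_add_one (mem_filter.mpr ⟨ha, hab⟩)

theorem ind_erase_of_lt (T : Finset ℕ) {a b : ℕ} (hba : b < a) :
    ind (T.erase a) b = ind T b := by
  rw [ind, ind, filter_erase, erase_eq_of_notMem]
  simp [hba]

section Boundary

variable {R : Type*} [CommRing R]

theorem neg_one_pow_ind_erase_of_lt {T : Finset ℕ} {a b : ℕ} (ha : a ∈ T) (hab : a < b) :
    (-1 : R) ^ ind T a * (-1) ^ ind (T.erase a) b
      = -((-1) ^ ind T b * (-1) ^ ind (T.erase b) a) := by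
  rw [ind_erase_of_lt T hab, ← ind_erase_add_one ha hab.le, pow_succ]
  ring

theorem neg_one_pow_ind_erase_antisymm {T : Finset ℕ} {a b : ℕ} (ha : a ∈ T) (hb : b ∈ T)
    (hab : a ≠ b) :
    (-1 : R) ^ ind T a * (-1) ^ ind (T.erase a) b
      = -((-1) ^ ind T b * (-1) ^ ind (T.erase b) a) := by
  rcases hab.lt_or_gt with h | h
  · exact neg_one_pow_ind_erase_of_lt ha h
  · rw [neg_one_pow_ind_erase_of_lt hb h, neg_neg]

def boundaryCoeff (ψ : ℕ → R) (A B : Finset ℕ) : R :=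
  ∑ x ∈ A, if A.erase x = B then (-1) ^ ind A x * ψ x else 0

theorem boundaryCoeff_eq_zero {ψ : ℕ → R} {A : Finset ℕ} (h : ∀ x ∈ A, ψ x = 0)
    (B : Finset ℕ) : boundaryCoeff ψ A B = 0 :=
  sum_eq_zero fun x hx => by simp [h x hx]

/-- Terms are cancelled in pairs by the swap `(x, y) ↦ (y, x)`; arguing `S = -S` instead would
fail in characteristic `2`. -/
theorem sum_boundaryCoeff_erase (ψ : ℕ → R) (T J : Finset ℕ) :
    ∑ x ∈ T, (-1) ^ ind T x * ψ x * boundaryCoeff ψ (T.erase x) J = 0 := by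
  simp_rw [boundaryCoeff, mul_sum, sum_sigma']
  refine sum_involution (fun p _ => ⟨p.2, p.1⟩) ?_ ?_ ?_ fun _ _ => rfl
  · rintro ⟨a, b⟩ hp
    simp only [mem_sigma, mem_erase] at hp
    obtain ⟨ha, hba, hb⟩ := hp
    rw [erase_right_comm]
    split_ifs
    · linear_combination (ψ a * ψ b) * neg_one_pow_ind_erase_antisymm (R := R) ha hb hba.symm
    · simp
  · rintro ⟨a, b⟩ hp _ h
    simp only [mem_sigma, mem_erase] at hp
    exact hp.2.1 (congrArg Sigma.fst h)
  · rintro ⟨a, b⟩ hp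
    simp only [mem_sigma, mem_erase] at hp ⊢
    exact ⟨hp.2.2, hp.2.1.symm, hp.1⟩

end Boundary

section Xi

variable {F : Type*} [Field F] {d m : ℕ} {ψ : ℕ → F}

theorem exists_boundaryCoeff_eq_sum_erase_insert {v : ℕ} {I : Finset ℕ} (hv : v ∉ I)
    (hψ : ψ v ≠ 0) : ∃ c : ℕ → F, ∀ J,
      boundaryCoeff ψ I J = ∑ x ∈ I, c x * boundaryCoeff ψ ((insert v I).erase x) J := by
  set K : F := (-1) ^ ind (insert v I) v * ψ v
  have hK : K ≠ 0 := mul_ne_zero (pow_ne_zero _ (neg_ne_zero.mpr one_ne_zero)) hψ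
  refine ⟨fun x => -(K⁻¹ * ((-1) ^ ind (insert v I) x * ψ x)), fun J => ?_⟩
  have hrel := sum_boundaryCoeff_erase ψ (insert v I) J
  rw [sum_insert hv, erase_insert hv] at hrel
  calc boundaryCoeff ψ I J = K⁻¹ * (K * boundaryCoeff ψ I J) := by field_simp
    _ = _ := by
      rw [eq_neg_of_add_eq_zero_left hrel, mul_neg, mul_sum, ← sum_neg_distrib]
      exact sum_congr rfl fun x _ => by ring

theorem Xi_apply (I : (Icc 1 d).powersetCard m) (J : (Icc 1 d).powersetCard (m - 1)) :
    Xi F d m ψ I J = boundaryCoeff ψ I J := by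
  rw [Xi, boundaryCoeff]
  refine (sum_congr rfl fun x hx => ?_).trans (sum_subset sdiff_subset fun x _ hx => ?_)
  · rw [mem_sdiff] at hx
    exact if_congr (erase_eq_iff_eq_insert hx.1 hx.2).symm rfl rfl
  · have hxJ : x ∈ J.val := by simp_all
    refine if_neg fun h => notMem_erase x I.val ?_
    rwa [h]

theorem Xi_eq_zero (h : ∀ v ∈ Icc 1 d, ψ v = 0) : Xi F d m ψ = 0 := by
  ext I J
  exact (Xi_apply I J).trans
    (boundaryCoeff_eq_zero (fun x hx => h x ((mem_powersetCard.mp I.2).1 hx)) J)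

theorem Xi_row_mem_span_rows_mem {v : ℕ} (hv : v ∈ Icc 1 d) (hψ : ψ v ≠ 0)
    (I : (Icc 1 d).powersetCard m) :
    (Xi F d m ψ).row I ∈ Submodule.span F ((Xi F d m ψ).row '' {I | v ∈ I.1}) := by
  have hrow : ∀ I, (Xi F d m ψ).row I = fun J => boundaryCoeff ψ I.1 J.1 :=
    fun I => funext (Xi_apply I)
  have hthrough : ∀ A (hA : A ∈ (Icc 1 d).powersetCard m), v ∈ A →
      (fun J => boundaryCoeff ψ A J.1) ∈ Submodule.span F ((Xi F d m ψ).row '' {I | v ∈ I.1}) :=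
    fun A hA hvA => Submodule.subset_span ⟨⟨A, hA⟩, hvA, hrow _⟩
  obtain ⟨I, hI⟩ := I
  by_cases hvI : v ∈ I
  · exact Submodule.subset_span ⟨_, hvI, rfl⟩
  obtain ⟨c, hc⟩ := exists_boundaryCoeff_eq_sum_erase_insert hvI hψ
  have hcomb : (Xi F d m ψ).row ⟨I, hI⟩ =
      ∑ x ∈ I, c x • fun J : (Icc 1 d).powersetCard (m - 1) =>
        boundaryCoeff ψ ((insert v I).erase x) J.1 := by
    funext J
    simp only [hrow, Finset.sum_apply, Pi.smul_apply, smul_eq_mul, hc]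
  rw [hcomb]
  exact Submodule.sum_mem _ fun x hx => Submodule.smul_mem _ _
    (hthrough _ (erase_insert_mem_powersetCard hI hv hvI hx)
      (mem_erase.mpr ⟨fun h => hvI (h ▸ hx), mem_insert_self v I⟩))

end Xi

theorem xi_rank_le_general (F : Type*) [Field F] (d m : ℕ) (hm1 : 1 ≤ m)
    (ψ : ℕ → F) :
    (Xi F d m ψ).rank ≤ (d - 1).choose (m - 1) := by
  by_cases hψ : ∀ v ∈ Icc 1 d, ψ v = 0
  · simp [Xi_eq_zero hψ]
  push Not at hψ
  obtain ⟨v, hv, hψv⟩ := hψ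
  have hcard := card_powersetCard_subtype_mem hv hm1
  rw [Nat.card_Icc, Nat.add_sub_cancel] at hcard
  exact hcard ▸ (Xi F d m ψ).rank_le_card_of_forall_row_mem_span {I | v ∈ I.1}
    (Xi_row_mem_span_rows_mem hv hψv)

theorem xi_rank_le (F : Type*) [Field F] (d m : ℕ) (hd : 1 ≤ d) (hm1 : 1 ≤ m) (hmd : m ≤ d)
    (ψ : ℕ → F) :
    (Xi F d m ψ).rank ≤ (d - 1).choose (m - 1) :=
  xi_rank_le_general F d m hm1 ψ
end

section
/- For every field F, all integers d ≥ 2 and 2 ≤ m ≤ d, every vector ψ ∈ F^d, and every (m−2)-element subset J ⊆ {1,…,d}, the following linear combination of columns of Ξ^{ψ,m} vanishes: Σ_{y ∈ {1,…,d}\J} (−1)^{ind(J∪{y}, y)} ψ_y · Ξ^{ψ,m}_{•, J∪{y}} = 0, where Ξ^{ψ,m}_{•, J∪{y}} denotes the column of Ξ^{ψ,m} indexed by the (m−1)-element subset J∪{y}. -/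
lemma ind_insert (K : Finset ℕ) (a x : ℕ) (ha : a ∉ K) :
    ind (insert a K) x = ind K x + if a ≤ x then 1 else 0 := by
  unfold ind
  rw [Finset.filter_insert]
  split_ifs with h
  · rw [Finset.card_insert_of_notMem (fun hmem => ha (Finset.mem_of_mem_filter a hmem))]
  · rw [Nat.add_zero]

lemma neg_one_pow_add_eq_zero (F : Type*) [Ring F] {a b : ℕ} (h : Odd (a + b)) :
    (-1 : F) ^ a + (-1 : F) ^ b = 0 := by
  rcases Nat.even_or_odd a with ha | ha <;> rcases Nat.even_or_odd b with hb | hb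
  · exact absurd (ha.add hb) (Nat.not_even_iff_odd.mpr h)
  · rw [ha.neg_one_pow, hb.neg_one_pow, add_neg_cancel]
  · rw [ha.neg_one_pow, hb.neg_one_pow, neg_add_cancel]
  · exact absurd (ha.add_odd hb) (Nat.not_even_iff_odd.mpr h)

/-- For every `(m-2)`-element subset `J ⊆ {1,…,d}`, the linear combination
`Σ_{y ∈ {1,…,d}\J} (−1)^{ind(J∪{y},y)} ψ_y · Ξ^{ψ,m}_{•, J∪{y}}` of columns of `Ξ^{ψ,m}`
vanishes (entrywise, i.e. in every row `I`). -/
theorem xi_columns_dependency (F : Type*) [Field F] (d m : ℕ) (hd : 2 ≤ d) (hm : 2 ≤ m)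
    (hmd : m ≤ d) (ψ : ℕ → F) (J : Finset ℕ) (hJ : J ⊆ Finset.Icc 1 d)
    (hJcard : J.card = m - 2) :
    ∀ I : ↥((Finset.Icc 1 d).powersetCard m),
      ∑ y ∈ (Finset.Icc 1 d \ J).attach,
        (-1 : F) ^ (ind (insert y.val J) y.val) * ψ y.val *
          Xi F d m ψ I ⟨insert y.val J, by
            have hy := y.property
            rw [Finset.mem_sdiff] at hy
            rw [Finset.mem_powersetCard]
            refine ⟨Finset.insert_subset hy.1 hJ, ?_⟩
            rw [Finset.card_insert_of_notMem hy.2, hJcard]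
            omega⟩ = 0 := by
  intro I
  obtain ⟨hIsub, hIcard⟩ := Finset.mem_powersetCard.mp I.property
  set g : ℕ × ℕ → F := fun p =>
    (-1 : F) ^ (ind (insert p.1 J) p.1) * ψ p.1 *
      (if I.val = insert p.2 (insert p.1 J) then (-1 : F) ^ (ind I.val p.2) * ψ p.2 else 0)
    with hg
  -- membership facts forced by the `if` condition
  have hforce : ∀ y x : ℕ, y ∉ J → I.val = insert x (insert y J) →
      x ∈ I.val ∧ x ∉ insert y J := by
    intro y x hyJ hx
    have hxI : x ∈ I.val := hx ▸ Finset.mem_insert_self x _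
    refine ⟨hxI, fun hmem => ?_⟩
    have : I.val = insert y J := by rw [hx, Finset.insert_eq_self.mpr hmem]
    have hcard : I.val.card = (insert y J).card := by rw [this]
    rw [hIcard, Finset.card_insert_of_notMem hyJ, hJcard] at hcard
    omega
  -- rewrite each term as a sum over `Icc 1 d \ J`
  have key : ∀ y ∈ (Finset.Icc 1 d \ J).attach,
      (-1 : F) ^ (ind (insert y.val J) y.val) * ψ y.val *
        Xi F d m ψ I ⟨insert y.val J, by
            have hy := y.property
            rw [Finset.mem_sdiff] at hy
            rw [Finset.mem_powersetCard]
            refine ⟨Finset.insert_subset hy.1 hJ, ?_⟩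
            rw [Finset.card_insert_of_notMem hy.2, hJcard]
            omega⟩ = ∑ x ∈ Finset.Icc 1 d \ J, g (y.val, x) := by
    intro y _
    have hy := Finset.mem_sdiff.mp y.property
    have hsets : (I.val \ insert y.val J).filter
          (fun x => I.val = insert x (insert y.val J)) =
        (Finset.Icc 1 d \ J).filter (fun x => I.val = insert x (insert y.val J)) := by
      ext x
      simp only [Finset.mem_filter, Finset.mem_sdiff]
      constructor
      · rintro ⟨_, hP⟩
        obtain ⟨hxI, hxn⟩ := hforce y.val x hy.2 hP
        exact ⟨⟨hIsub hxI, fun hxJ => hxn (Finset.mem_insert_of_mem hxJ)⟩, hP⟩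
      · rintro ⟨_, hP⟩
        exact ⟨hforce y.val x hy.2 hP, hP⟩
    simp only [Xi, hg]
    rw [← Finset.mul_sum]
    congr 1
    rw [← Finset.sum_filter, ← Finset.sum_filter]
    exact Finset.sum_congr hsets (fun _ _ => rfl)
  rw [Finset.sum_congr rfl key,
    Finset.sum_attach (Finset.Icc 1 d \ J) (fun y => ∑ x ∈ Finset.Icc 1 d \ J, g (y, x)),
    ← Finset.sum_product']
  refine Finset.sum_involution (fun p _ => (p.2, p.1)) ?_ ?_ ?_ ?_
  · rintro ⟨y, x⟩ hp
    rw [Finset.mem_product] at hp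
    obtain ⟨hyt, hxt⟩ := hp
    rw [Finset.mem_sdiff] at hyt hxt
    by_cases hc : I.val = insert x (insert y J)
    · have hc' : I.val = insert y (insert x J) := by rw [hc, Finset.insert_comm]
      obtain ⟨hxI, hxn⟩ := hforce y x hyt.2 hc
      have hxy : x ≠ y := fun h => hxn (h ▸ Finset.mem_insert_self x J)
      have hyn : y ∉ insert x J := by
        simp only [Finset.mem_insert]
        push_neg
        exact ⟨fun h => hxy h.symm, hyt.2⟩
      have e1 : ind (insert y J) y = ind J y + 1 := by
        rw [ind_insert J y y hyt.2, if_pos le_rfl]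
      have e2 : ind (insert x J) x = ind J x + 1 := by
        rw [ind_insert J x x hxt.2, if_pos le_rfl]
      have e3 : ind I.val x = ind J x + (if y ≤ x then 1 else 0) + 1 := by
        rw [hc, ind_insert (insert y J) x x hxn, if_pos le_rfl,
          ind_insert J y x hyt.2]
      have e4 : ind I.val y = ind J y + (if x ≤ y then 1 else 0) + 1 := by
        rw [hc', ind_insert (insert x J) y y hyn, if_pos le_rfl,
          ind_insert J x y hxt.2]
      have hodd : Odd ((ind (insert y J) y + ind I.val x) +
          (ind (insert x J) x + ind I.val y)) := by
        rw [Nat.odd_iff, e1, e2, e3, e4]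
        split_ifs with h1 h2 h2 <;> omega
      have hz := neg_one_pow_add_eq_zero F hodd
      simp only [hg, if_pos hc, if_pos hc']
      calc (-1 : F) ^ ind (insert y J) y * ψ y * ((-1 : F) ^ ind I.val x * ψ x) +
            (-1 : F) ^ ind (insert x J) x * ψ x * ((-1 : F) ^ ind I.val y * ψ y)
          = ((-1 : F) ^ (ind (insert y J) y + ind I.val x) +
              (-1 : F) ^ (ind (insert x J) x + ind I.val y)) * (ψ y * ψ x) := by
            rw [pow_add, pow_add]; ring
        _ = 0 := by rw [hz, zero_mul]
    · have hc' : ¬ I.val = insert y (insert x J) := by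
        rw [Finset.insert_comm]; exact hc
      simp only [hg, if_neg hc, if_neg hc', mul_zero, add_zero]
  · rintro ⟨y, x⟩ hp hne heq
    exfalso
    apply hne
    have h1 : x = y := congrArg Prod.fst heq
    have hc : ¬ I.val = insert x (insert y J) := by
      rw [h1, Finset.insert_idem]
      intro h
      rw [Finset.mem_product, Finset.mem_sdiff] at hp
      have : I.val.card = (insert y J).card := by rw [h]
      rw [hIcard, Finset.card_insert_of_notMem hp.1.2, hJcard] at this
      omega
    simp only [hg, if_neg hc, mul_zero]
  · rintro ⟨y, x⟩ hp
    rw [Finset.mem_product] at hp ⊢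
    exact ⟨hp.2, hp.1⟩
  · rintro ⟨y, x⟩ _
    rfl
end

section
/- For every field F, all integers d ≥ 2 and 2 ≤ m ≤ d, every vector ψ ∈ F^d with ψ_d ≠ 0, and every m−1-element subset I of {1,…,d} with d ∈ I, letting J = I \ {d}, the column of Ξ^{ψ,m} indexed by I satisfies: Ξ^{ψ,m}_{•,I} = (−1)^m ψ_d^{−1} · Σ_{y ∈ {1,…,d−1}\J} (−1)^{ind(J∪{y}, y)} ψ_y · Ξ^{ψ,m}_{•, J∪{y}}. In particular, every column of Ξ^{ψ,m} whose index contains d is a linear combination of the columns whose indices are subsets of {1,…,d−1}. -/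
open Finset

lemma ind_insert_of_le {a x : ℕ} {K : Finset ℕ} (ha : a ∉ K) (h : a ≤ x) :
    ind (insert a K) x = ind K x + 1 := by
  unfold ind
  rw [filter_insert, if_pos h, card_insert_of_notMem (fun hm => ha (mem_of_mem_filter a hm))]

lemma ind_insert_of_lt {a x : ℕ} (K : Finset ℕ) (h : x < a) : ind (insert a K) x = ind K x := by
  unfold ind
  rw [filter_insert, if_neg (by omega)]

lemma ind_eq_card {S : Finset ℕ} {x : ℕ} (h : ∀ y ∈ S, y ≤ x) : ind S x = S.card := by
  unfold ind
  rw [filter_true_of_mem h]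

section XiEntry

variable {F : Type*} [CommRing F] (ψ : ℕ → F)

/-- The entry formula of `Xi`, with row and column indices freed from their subtypes. -/
def xiEntry (R K : Finset ℕ) : F :=
  ∑ x ∈ R \ K, if R = insert x K then (-1 : F) ^ ind R x * ψ x else 0

lemma xiEntry_insert_self {x : ℕ} {K : Finset ℕ} (hx : x ∉ K) :
    xiEntry ψ (insert x K) K = (-1 : F) ^ ind (insert x K) x * ψ x := by
  rw [xiEntry, insert_sdiff_of_notMem _ hx, sdiff_self, bot_eq_empty, insert_empty,
    sum_singleton, if_pos rfl]

lemma exists_eq_insert_of_xiEntry_ne_zero {R K : Finset ℕ} (h : xiEntry ψ R K ≠ 0) :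
    ∃ x ∉ K, R = insert x K := by
  obtain ⟨x, hx, hne⟩ := exists_ne_zero_of_sum_ne_zero h
  exact ⟨x, (mem_sdiff.1 hx).2, by by_contra he; exact hne (if_neg he)⟩

lemma xiEntry_eq_zero_of_not_subset {R K : Finset ℕ} (h : ¬K ⊆ R) : xiEntry ψ R K = 0 := by
  by_contra hne
  obtain ⟨x, -, rfl⟩ := exists_eq_insert_of_xiEntry_ne_zero ψ hne
  exact h (subset_insert x K)

lemma xiEntry_pair_cancel {a b : ℕ} {J : Finset ℕ} (hab : a < b) (ha : a ∉ J) (hb : b ∉ J) :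
    (-1 : F) ^ ind (insert a J) a * ψ a * xiEntry ψ (insert a (insert b J)) (insert a J) +
      (-1 : F) ^ ind (insert b J) b * ψ b * xiEntry ψ (insert a (insert b J)) (insert b J) =
        0 := by
  have hb' : b ∉ insert a J := by simp [hab.ne', hb]
  have ha' : a ∉ insert b J := by simp [hab.ne, ha]
  rw [insert_comm, xiEntry_insert_self ψ hb', insert_comm, xiEntry_insert_self ψ ha',
    ind_insert_of_le ha' hab.le, insert_comm, ind_insert_of_lt _ hab, pow_succ]
  ring

theorem sum_sign_mul_xiEntry_insert_eq_zero (R J : Finset ℕ) :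
    ∑ y ∈ R \ J, (-1 : F) ^ ind (insert y J) y * ψ y * xiEntry ψ R (insert y J) = 0 := by
  by_contra hne
  obtain ⟨y, hy, hterm⟩ := exists_ne_zero_of_sum_ne_zero hne
  obtain ⟨x, hx, rfl⟩ := exists_eq_insert_of_xiEntry_ne_zero ψ (right_ne_zero_of_mul hterm)
  obtain ⟨hxy, hxJ⟩ : x ≠ y ∧ x ∉ J := not_or.1 (mem_insert.not.1 hx)
  have hyJ : y ∉ J := (mem_sdiff.1 hy).2
  have hRJ : insert x (insert y J) \ J = {x, y} := by
    rw [insert_sdiff_of_notMem _ hxJ, insert_sdiff_of_notMem _ hyJ, sdiff_self, bot_eq_empty,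
      insert_empty]
  apply hne
  rw [hRJ, sum_pair hxy]
  rcases hxy.lt_or_gt with h | h
  · exact xiEntry_pair_cancel ψ h hxJ hyJ
  · rw [add_comm, insert_comm]
    exact xiEntry_pair_cancel ψ h hyJ hxJ

theorem sum_sign_mul_xiEntry_insert_eq_zero_of_subset {R T : Finset ℕ} (hRT : R ⊆ T)
    (J : Finset ℕ) :
    ∑ y ∈ T \ J, (-1 : F) ^ ind (insert y J) y * ψ y * xiEntry ψ R (insert y J) = 0 := by
  rw [← sum_subset (sdiff_subset_sdiff hRT subset_rfl), sum_sign_mul_xiEntry_insert_eq_zero]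
  intro y hyT hyR
  rw [xiEntry_eq_zero_of_not_subset ψ, mul_zero]
  exact fun hsub => hyR (mem_sdiff.2 ⟨hsub (mem_insert_self y J), (mem_sdiff.1 hyT).2⟩)

end XiEntry

lemma Xi_apply_s2 {F : Type*} [Field F] (d m : ℕ) (ψ : ℕ → F)
    (R : ↥((Icc 1 d).powersetCard m)) (K : ↥((Icc 1 d).powersetCard (m - 1))) :
    Xi F d m ψ R K = xiEntry ψ R.val K.val :=
  rfl

/-- If `ψ_d ≠ 0` and `I` is an `(m-1)`-element subset of `{1,…,d}` with `d ∈ I`, then (with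
`J = I \ {d}`) the column of `Ξ^{ψ,m}` indexed by `I` equals
`(−1)^m ψ_d^{−1} · Σ_{y ∈ {1,…,d−1}\J} (−1)^{ind(J∪{y}, y)} ψ_y · Ξ^{ψ,m}_{•, J∪{y}}`;
in particular every column whose index contains `d` is a linear combination of the columns
whose indices are subsets of `{1,…,d−1}`. -/
theorem xi_column_with_d_is_combination (F : Type*) [Field F] (d m : ℕ)
    (hm : 2 ≤ m) (ψ : ℕ → F) (hψd : ψ d ≠ 0)
    (I : Finset ℕ) (hIsub : I ⊆ Finset.Icc 1 d) (hIcard : I.card = m - 1) (hdI : d ∈ I) :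
    ∀ R : ↥((Finset.Icc 1 d).powersetCard m),
      Xi F d m ψ R ⟨I, by rw [Finset.mem_powersetCard]; exact ⟨hIsub, hIcard⟩⟩ =
        (-1 : F) ^ m * (ψ d)⁻¹ *
          ∑ y ∈ (Finset.Icc 1 (d - 1) \ (I.erase d)).attach,
            (-1 : F) ^ (ind (insert y.val (I.erase d)) y.val) * ψ y.val *
              Xi F d m ψ R ⟨insert y.val (I.erase d), by
                have hy := y.property
                rw [Finset.mem_sdiff] at hy
                have hysub : y.val ∈ Finset.Icc 1 d := by
                  have := hy.1
                  rw [Finset.mem_Icc] at this ⊢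
                  omega
                rw [Finset.mem_powersetCard]
                refine ⟨Finset.insert_subset hysub
                  ((Finset.erase_subset _ _).trans hIsub), ?_⟩
                rw [Finset.card_insert_of_notMem hy.2, Finset.card_erase_of_mem hdI, hIcard]
                omega⟩ := by
  intro R
  set J := I.erase d
  have hdJ : d ∉ J := notMem_erase d I
  have hIJ : insert d J = I := insert_erase hdI
  have hd : 1 ≤ d := (mem_Icc.1 (hIsub hdI)).1
  have hindI : ind I d = m - 1 := by
    rw [ind_eq_card fun y hy => (mem_Icc.1 (hIsub hy)).2, hIcard]
  have hT : Icc 1 d \ J = insert d (Icc 1 (d - 1) \ J) := by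
    rw [← insert_sdiff_of_notMem _ hdJ]
    congr 1
    ext y
    simp only [mem_insert, mem_Icc]
    omega
  have key := sum_sign_mul_xiEntry_insert_eq_zero_of_subset ψ
    (mem_powersetCard.1 R.property).1 J
  rw [hT, sum_insert (by simp only [mem_sdiff, mem_Icc]; omega), hIJ, hindI] at key
  simp only [Xi_apply_s2]
  rw [sum_attach (Icc 1 (d - 1) \ J)
    (fun y => (-1 : F) ^ ind (insert y J) y * ψ y * xiEntry ψ R.val (insert y J))]
  obtain ⟨k, rfl⟩ := Nat.exists_eq_add_of_le' (one_le_two.trans hm)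
  rw [Nat.add_sub_cancel] at key
  have hsq : (-1 : F) ^ k * (-1) ^ k = 1 := by rw [← mul_pow, neg_one_mul, neg_neg, one_pow]
  field_simp
  linear_combination (-1 : F) ^ k * key - xiEntry ψ R.val I * ψ d * hsq
end

section
/- (Exact repair identity.) For every field F, all integers d ≥ 1 and 1 ≤ m ≤ d, every matrix D over F with rows indexed by {1,…,d} and columns indexed by the m-element subsets of {1,…,d} that satisfies the parity condition, every vector ψ ∈ F^d, and every m-element subset I ⊆ {1,…,d}: Σ_{x=1}^{d} ψ_x D_{x,I} = Σ_{x ∈ I} (−1)^{ind(I,x)} (D · Ξ^{ψ,m})_{x, I\{x}}, where (D · Ξ^{ψ,m})_{x, I\{x}} is the entry of the matrix product D · Ξ^{ψ,m} in row x and in the column indexed by the (m−1)-element subset I \ {x}. -/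
lemma ind_insert_of_notMem (a b : ℕ) (S : Finset ℕ) (ha : a ∉ S) :
    ind (insert a S) b = ind S b + if a ≤ b then 1 else 0 := by
  unfold ind
  rw [Finset.filter_insert]
  split
  · rw [Finset.card_insert_of_notMem (fun h => ha (Finset.mem_filter.mp h).1)]
  · simp

lemma sign_key (F : Type*) [Field F] (x y : ℕ) (I : Finset ℕ) (hx : x ∈ I) (hy : y ∉ I) :
    ((-1 : F)) ^ (ind (insert y I) x) * (-1) ^ (ind (insert y I) y)
      = -(((-1 : F)) ^ (ind I x) * (-1) ^ (ind (insert y (I.erase x)) y)) := by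
  have hxy : x ≠ y := fun h => hy (h ▸ hx)
  have h1 : ind (insert y I) x = ind I x + (if y ≤ x then 1 else 0) :=
    ind_insert_of_notMem y x I hy
  have hK : insert y I = insert x (insert y (I.erase x)) := by
    rw [Finset.insert_comm, Finset.insert_erase hx]
  have hxnot : x ∉ insert y (I.erase x) := by
    simp [Finset.mem_insert, hxy, Finset.mem_erase]
  have h2 : ind (insert y I) y
      = ind (insert y (I.erase x)) y + (if x ≤ y then 1 else 0) := by
    rw [hK]; exact ind_insert_of_notMem x y _ hxnot
  rw [h1, h2, pow_add, pow_add]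
  rcases lt_or_gt_of_ne hxy with h | h
  · rw [if_neg (by omega : ¬ y ≤ x), if_pos (by omega : x ≤ y), pow_zero, pow_one]; ring
  · rw [if_pos (by omega : y ≤ x), if_neg (by omega : ¬ x ≤ y), pow_zero, pow_one]; ring

/-- Exact repair identity: if the matrix `D` (rows indexed by `{1,…,d}`, columns indexed by
`m`-element subsets of `{1,…,d}`) satisfies the parity condition
`Σ_{y ∈ K} (−1)^{ind(K,y)} D_{y, K\{y}} = 0` for every `(m+1)`-element subset `K ⊆ {1,…,d}`,
then for every `ψ ∈ F^d` and every `m`-element subset `I ⊆ {1,…,d}`: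
`Σ_{x=1}^{d} ψ_x D_{x,I} = Σ_{x ∈ I} (−1)^{ind(I,x)} (D · Ξ^{ψ,m})_{x, I\{x}}`. -/
theorem exact_repair_identity (F : Type*) [Field F] (d m : ℕ) (hd : 1 ≤ d) (hm1 : 1 ≤ m)
    (hmd : m ≤ d)
    (D : Matrix ↥(Finset.Icc 1 d) ↥((Finset.Icc 1 d).powersetCard m) F)
    (hparity : ∀ (K : Finset ℕ) (hKsub : K ⊆ Finset.Icc 1 d) (hKcard : K.card = m + 1),
      ∑ y ∈ K.attach,
        (-1 : F) ^ (ind K y.val) *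
          D ⟨y.val, hKsub y.property⟩ ⟨K.erase y.val, by
            rw [Finset.mem_powersetCard]
            refine ⟨(Finset.erase_subset _ _).trans hKsub, ?_⟩
            rw [Finset.card_erase_of_mem y.property, hKcard]; omega⟩ = 0)
    (ψ : ℕ → F) (I : Finset ℕ) (hIsub : I ⊆ Finset.Icc 1 d) (hIcard : I.card = m) :
    ∑ x ∈ (Finset.Icc 1 d).attach,
        ψ x.val * D x ⟨I, by rw [Finset.mem_powersetCard]; exact ⟨hIsub, hIcard⟩⟩ =
      ∑ x ∈ I.attach,
        (-1 : F) ^ (ind I x.val) *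
          (D * Xi F d m ψ) ⟨x.val, hIsub x.property⟩ ⟨I.erase x.val, by
            rw [Finset.mem_powersetCard]
            refine ⟨(Finset.erase_subset _ _).trans hIsub, ?_⟩
            rw [Finset.card_erase_of_mem x.property, hIcard]⟩ := by
  classical
  set E : ℕ → Finset ℕ → F := fun x S =>
    if h : x ∈ Finset.Icc 1 d ∧ S ∈ (Finset.Icc 1 d).powersetCard m
    then D ⟨x, h.1⟩ ⟨S, h.2⟩ else 0 with hE
  have hEeq : ∀ (x : ℕ) (hx : x ∈ Finset.Icc 1 d) (S : Finset ℕ)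
      (hS : S ∈ (Finset.Icc 1 d).powersetCard m), E x S = D ⟨x, hx⟩ ⟨S, hS⟩ := by
    intro x hx S hS; simp only [hE, dif_pos (And.intro hx hS)]
  have hIP : I ∈ (Finset.Icc 1 d).powersetCard m := by
    rw [Finset.mem_powersetCard]; exact ⟨hIsub, hIcard⟩
  have hins : ∀ x ∈ I, ∀ y ∈ Finset.Icc 1 d \ (I.erase x),
      insert y (I.erase x) ∈ (Finset.Icc 1 d).powersetCard m := by
    intro x hx y hy
    rw [Finset.mem_sdiff] at hy
    rw [Finset.mem_powersetCard]
    refine ⟨Finset.insert_subset hy.1 ((Finset.erase_subset _ _).trans hIsub), ?_⟩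
    rw [Finset.card_insert_of_notMem hy.2, Finset.card_erase_of_mem hx, hIcard]
    omega
  -- Left-hand side in terms of `E`
  have hL : (∑ x ∈ (Finset.Icc 1 d).attach,
        ψ x.val * D x ⟨I, by rw [Finset.mem_powersetCard]; exact ⟨hIsub, hIcard⟩⟩)
      = ∑ x ∈ Finset.Icc 1 d, ψ x * E x I := by
    refine Eq.trans ?_ (Finset.sum_attach (Finset.Icc 1 d) (fun x => ψ x * E x I))
    refine Finset.sum_congr rfl fun x _ => ?_
    rw [hEeq x.val x.property I hIP]
  -- Right-hand side in terms of `E`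
  have hR : (∑ x ∈ I.attach,
        (-1 : F) ^ (ind I x.val) *
          (D * Xi F d m ψ) ⟨x.val, hIsub x.property⟩ ⟨I.erase x.val, by
            rw [Finset.mem_powersetCard]
            refine ⟨(Finset.erase_subset _ _).trans hIsub, ?_⟩
            rw [Finset.card_erase_of_mem x.property, hIcard]⟩)
      = ∑ x ∈ I, (-1 : F) ^ (ind I x) *
          ∑ S ∈ (Finset.Icc 1 d).powersetCard m, E x S * (∑ y ∈ S \ (I.erase x),
            if S = insert y (I.erase x) then (-1 : F) ^ (ind S y) * ψ y else 0) := by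
    refine Eq.trans ?_ (Finset.sum_attach I (fun x => (-1 : F) ^ (ind I x) *
          ∑ S ∈ (Finset.Icc 1 d).powersetCard m, E x S * (∑ y ∈ S \ (I.erase x),
            if S = insert y (I.erase x) then (-1 : F) ^ (ind S y) * ψ y else 0)))
    refine Finset.sum_congr rfl fun x _ => ?_
    congr 1
    rw [Matrix.mul_apply]
    refine Eq.trans ?_ (Finset.sum_coe_sort ((Finset.Icc 1 d).powersetCard m)
      (fun S => E x.val S * (∑ y ∈ S \ (I.erase x.val),
        if S = insert y (I.erase x.val) then (-1 : F) ^ (ind S y) * ψ y else 0)))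
    refine Finset.sum_congr rfl fun S _ => ?_
    rw [hEeq x.val (hIsub x.property) S.val S.property]
    rfl
  rw [hL, hR]
  -- Step 1: evaluate the inner sum over subsets for each `x ∈ I`
  have step1 : ∀ x ∈ I,
      (∑ S ∈ (Finset.Icc 1 d).powersetCard m, E x S * (∑ y ∈ S \ (I.erase x),
        if S = insert y (I.erase x) then (-1 : F) ^ (ind S y) * ψ y else 0))
      = ∑ y ∈ Finset.Icc 1 d \ (I.erase x),
          E x (insert y (I.erase x)) * ((-1 : F) ^ (ind (insert y (I.erase x)) y) * ψ y) := by
    intro x hx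
    calc ∑ S ∈ (Finset.Icc 1 d).powersetCard m, E x S * (∑ y ∈ S \ I.erase x,
            if S = insert y (I.erase x) then (-1 : F) ^ (ind S y) * ψ y else 0)
        = ∑ S ∈ (Finset.Icc 1 d).powersetCard m, ∑ y ∈ S \ I.erase x,
            (if S = insert y (I.erase x)
              then E x S * ((-1 : F) ^ (ind S y) * ψ y) else 0) := by
          refine Finset.sum_congr rfl fun S _ => ?_
          rw [Finset.mul_sum]
          refine Finset.sum_congr rfl fun y _ => ?_
          rw [mul_ite, mul_zero]
      _ = ∑ S ∈ (Finset.Icc 1 d).powersetCard m, ∑ y ∈ Finset.Icc 1 d \ I.erase x,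
            (if S = insert y (I.erase x)
              then E x S * ((-1 : F) ^ (ind S y) * ψ y) else 0) := by
          refine Finset.sum_congr rfl fun S hS => Finset.sum_subset ?_ ?_
          · exact Finset.sdiff_subset_sdiff
              (Finset.mem_powersetCard.mp hS).1 (le_refl _)
          · intro y hyT hyS
            rw [if_neg]
            intro h
            exact hyS (Finset.mem_sdiff.mpr
              ⟨h ▸ Finset.mem_insert_self y (I.erase x), (Finset.mem_sdiff.mp hyT).2⟩)
      _ = ∑ y ∈ Finset.Icc 1 d \ I.erase x, ∑ S ∈ (Finset.Icc 1 d).powersetCard m,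
            (if S = insert y (I.erase x)
              then E x S * ((-1 : F) ^ (ind S y) * ψ y) else 0) :=
          Finset.sum_comm
      _ = ∑ y ∈ Finset.Icc 1 d \ I.erase x,
            E x (insert y (I.erase x)) * ((-1 : F) ^ (ind (insert y (I.erase x)) y) * ψ y) := by
          refine Finset.sum_congr rfl fun y hy => ?_
          rw [Finset.sum_ite_eq' ((Finset.Icc 1 d).powersetCard m) (insert y (I.erase x))
            (fun S => E x S * ((-1 : F) ^ (ind S y) * ψ y)), if_pos (hins x hx y hy)]
  -- splitting off the diagonal term `y = x`
  have hsplit : ∀ x ∈ I, Finset.Icc 1 d \ (I.erase x) = insert x (Finset.Icc 1 d \ I) := by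
    intro x hx
    ext a
    constructor
    · intro ha
      rw [Finset.mem_sdiff, Finset.mem_erase] at ha
      rw [Finset.mem_insert, Finset.mem_sdiff]
      by_cases hax : a = x
      · exact Or.inl hax
      · exact Or.inr ⟨ha.1, fun haI => ha.2 ⟨hax, haI⟩⟩
    · intro ha
      rw [Finset.mem_insert, Finset.mem_sdiff] at ha
      rw [Finset.mem_sdiff, Finset.mem_erase]
      rcases ha with rfl | ⟨haT, haI⟩
      · exact ⟨hIsub hx, fun h => h.1 rfl⟩
      · exact ⟨haT, fun h => haI h.2⟩
  have step2 : ∀ x ∈ I,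
      (-1 : F) ^ (ind I x) * ∑ y ∈ Finset.Icc 1 d \ (I.erase x),
          E x (insert y (I.erase x)) * ((-1 : F) ^ (ind (insert y (I.erase x)) y) * ψ y)
      = ψ x * E x I + ∑ y ∈ Finset.Icc 1 d \ I,
          (-1 : F) ^ (ind I x) *
            (E x (insert y (I.erase x)) *
              ((-1 : F) ^ (ind (insert y (I.erase x)) y) * ψ y)) := by
    intro x hx
    rw [hsplit x hx, Finset.sum_insert (by simp [hx]), mul_add, Finset.mul_sum]
    congr 1
    rw [Finset.insert_erase hx]
    have h1 : ((-1 : F)) ^ (ind I x) * ((-1 : F)) ^ (ind I x) = 1 := by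
      rw [← pow_add, ← two_mul, pow_mul]; norm_num
    calc ((-1 : F)) ^ (ind I x) * (E x I * ((-1 : F) ^ (ind I x) * ψ x))
        = (((-1 : F)) ^ (ind I x) * ((-1 : F)) ^ (ind I x)) * (ψ x * E x I) := by ring
      _ = ψ x * E x I := by rw [h1, one_mul]
  -- Step 3: parity relation handles the off-diagonal terms
  have step3 : ∀ y ∈ Finset.Icc 1 d \ I,
      ψ y * E y I = ∑ x ∈ I,
        (-1 : F) ^ (ind I x) *
          (E x (insert y (I.erase x)) *
            ((-1 : F) ^ (ind (insert y (I.erase x)) y) * ψ y)) := by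
    intro y hy
    rw [Finset.mem_sdiff] at hy
    obtain ⟨hyT, hyI⟩ := hy
    have hKsub : insert y I ⊆ Finset.Icc 1 d := Finset.insert_subset hyT hIsub
    have hKcard : (insert y I).card = m + 1 := by
      rw [Finset.card_insert_of_notMem hyI, hIcard]
    have hKxP : ∀ z ∈ insert y I,
        (insert y I).erase z ∈ (Finset.Icc 1 d).powersetCard m := by
      intro z hz
      rw [Finset.mem_powersetCard]
      refine ⟨(Finset.erase_subset _ _).trans hKsub, ?_⟩
      rw [Finset.card_erase_of_mem hz, hKcard]
      omega
    have hpar : ∑ z ∈ insert y I,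
        (-1 : F) ^ (ind (insert y I) z) * E z ((insert y I).erase z) = 0 := by
      refine Eq.trans (Eq.trans (Finset.sum_attach (insert y I)
        (fun z => (-1 : F) ^ (ind (insert y I) z) * E z ((insert y I).erase z))).symm ?_)
        (hparity (insert y I) hKsub hKcard)
      refine Finset.sum_congr rfl fun z _ => ?_
      rw [hEeq z.val (hKsub z.property) ((insert y I).erase z.val) (hKxP z.val z.property)]
    rw [Finset.sum_insert hyI, Finset.erase_insert hyI] at hpar
    have h2 : ∑ x ∈ I, (-1 : F) ^ (ind (insert y I) x) * E x ((insert y I).erase x)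
        = -((-1 : F) ^ (ind (insert y I) y) * E y I) := by linear_combination hpar
    have hsq : ((-1 : F)) ^ (ind (insert y I) y) * ((-1 : F)) ^ (ind (insert y I) y) = 1 := by
      rw [← pow_add, ← two_mul, pow_mul]; norm_num
    symm
    calc ∑ x ∈ I, (-1 : F) ^ (ind I x) *
            (E x (insert y (I.erase x)) *
              ((-1 : F) ^ (ind (insert y (I.erase x)) y) * ψ y))
        = ∑ x ∈ I, (-((-1 : F) ^ (ind (insert y I) y)) * ψ y) *
            ((-1 : F) ^ (ind (insert y I) x) * E x ((insert y I).erase x)) := by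
          refine Finset.sum_congr rfl fun x hx => ?_
          have hyx : y ≠ x := fun h => hyI (h ▸ hx)
          have hker : (insert y I).erase x = insert y (I.erase x) :=
            Finset.erase_insert_of_ne hyx
          rw [hker]
          have hs := sign_key F x y I hx hyI
          linear_combination (E x (insert y (I.erase x)) * ψ y) * hs
      _ = (-((-1 : F) ^ (ind (insert y I) y)) * ψ y) *
            ∑ x ∈ I, (-1 : F) ^ (ind (insert y I) x) * E x ((insert y I).erase x) := by
          rw [← Finset.mul_sum]
      _ = ψ y * E y I := by
          rw [h2]
          linear_combination (ψ y * E y I) * hsq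
  -- Final assembly
  calc ∑ x ∈ Finset.Icc 1 d, ψ x * E x I
      = ∑ x ∈ I, ψ x * E x I + ∑ y ∈ Finset.Icc 1 d \ I, ψ y * E y I := by
        rw [← Finset.sum_sdiff hIsub, add_comm]
    _ = ∑ x ∈ I, ψ x * E x I + ∑ y ∈ Finset.Icc 1 d \ I, ∑ x ∈ I,
          (-1 : F) ^ (ind I x) *
            (E x (insert y (I.erase x)) *
              ((-1 : F) ^ (ind (insert y (I.erase x)) y) * ψ y)) := by
        congr 1
        exact Finset.sum_congr rfl step3
    _ = ∑ x ∈ I, (ψ x * E x I + ∑ y ∈ Finset.Icc 1 d \ I,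
          (-1 : F) ^ (ind I x) *
            (E x (insert y (I.erase x)) *
              ((-1 : F) ^ (ind (insert y (I.erase x)) y) * ψ y))) := by
        rw [Finset.sum_add_distrib]
        congr 1
        exact Finset.sum_comm
    _ = ∑ x ∈ I, (-1 : F) ^ (ind I x) *
          ∑ S ∈ (Finset.Icc 1 d).powersetCard m, E x S * (∑ y ∈ S \ (I.erase x),
            if S = insert y (I.erase x) then (-1 : F) ^ (ind S y) * ψ y else 0) := by
        refine Finset.sum_congr rfl fun x hx => ?_
        rw [step1 x hx, step2 x hx]
end

section
/- (Repair bandwidth for multiple failures.) For every field F, all integers d ≥ 1, 1 ≤ m ≤ d and 1 ≤ e ≤ d, and every e × d matrix Ψ_E over F of rank e with rows ψ^{(1)},…,ψ^{(e)} ∈ F^d, the rank of the concatenated repair matrix Ξ^{E,m} = [Ξ^{ψ^{(1)},m} | Ξ^{ψ^{(2)},m} | … | Ξ^{ψ^{(e)},m}] (the matrix with rows indexed by m-element subsets of {1,…,d} obtained by horizontally concatenating the e repair-encoder matrices) is at most C(d,m) − C(d−e,m). -/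
/-!
Up to sign conventions, `Ξ^{ψ,m}` is the matrix of `ω ↦ ψ ∧ ω` from `⋀^{m-1}` to `⋀^m`, so its
left kernel contains the wedge `u₁ ∧ ⋯ ∧ u_m` of any vectors annihilated by `ψ`. Choose columns
`E` of `Ψ` that are linearly independent and span all the others (so `|E| ≤ e`), and for each
`y ∉ E` a vector `u_y ∈ ker Ψ` agreeing with the unit vector `e_y` off `E`. For every `m`-subset
`S` of the complement of `E`, the Plücker coordinates of `⋀_{y ∈ S} u_y` lie in the left kernel of
the concatenated matrix, and on the coordinates indexed by such subsets these vectors form an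
identity matrix. Rank–nullity with these `C(d - |E|, m) ≥ C(d - e, m)` independent kernel
vectors gives the bound.
-/

open Finset Matrix

section Determinant

variable {R ι α : Type*} [CommRing R] {n : ℕ}

lemma det_submatrix_cons_eq_zero_of_mem_range (U : Matrix ι α R) (s : Fin (n + 1) → ι)
    {t : Fin n → α} {x : α} (hx : x ∈ Set.range t) : (U.submatrix s (Fin.cons x t)).det = 0 := by
  obtain ⟨j, rfl⟩ := hx
  exact det_zero_of_column_eq (Fin.succ_ne_zero j).symm fun a => by simp

lemma sum_mul_det_submatrix_cons_eq_zero (U : Matrix ι α R) (s : Fin (n + 1) → ι)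
    (t : Fin n → α) (X : Finset α) (ψ : α → R) (h : ∀ a, ∑ x ∈ X, ψ x * U (s a) x = 0) :
    ∑ x ∈ X, ψ x * (U.submatrix s (Fin.cons x t)).det = 0 := by
  simp_rw [det_succ_column_zero, mul_sum]
  rw [sum_comm]
  refine sum_eq_zero fun a _ => ?_
  have hminor : ∀ x, (U.submatrix s (Fin.cons x t)).submatrix a.succAbove Fin.succ =
      U.submatrix (s ∘ a.succAbove) t := fun x => rfl
  simp only [submatrix_apply, Fin.cons_zero, hminor]
  calc _ = (-1) ^ (a : ℕ) * (∑ x ∈ X, ψ x * U (s a) x) *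
        (U.submatrix (s ∘ a.succAbove) t).det := by
        rw [mul_sum, sum_mul]; congr 1; ext x; ring
    _ = 0 := by rw [h, mul_zero, zero_mul]

end Determinant

lemma ind_orderEmbOfFin {K : Finset ℕ} {k : ℕ} (h : #K = k) (q : Fin k) :
    ind K (K.orderEmbOfFin h q) = q + 1 := by
  set f := K.orderEmbOfFin h
  rw [ind, ← image_orderEmbOfFin_univ K h, filter_image, card_image_of_injective _ f.injective,
    ← Fin.card_Iic]
  congr 1
  ext a
  simp [f]

lemma orderEmbOfFin_insert_comp_cycleRange_symm {α : Type*} [LinearOrder α] {n : ℕ}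
    {J : Finset α} {x : α} (hJ : #J = n) (hK : #(insert x J) = n + 1) {q : Fin (n + 1)}
    (hq : (insert x J).orderEmbOfFin hK q = x) :
    (insert x J).orderEmbOfFin hK ∘ q.cycleRange.symm = Fin.cons x (J.orderEmbOfFin hJ) := by
  rw [← Fin.cons_removeNth_eq_comp_cycleRange_symm, hq]
  congr 1
  ext i
  rw [Fin.removeNth_apply]
  refine congrFun (orderEmbOfFin_unique hJ (fun j => ?_)
    (((insert x J).orderEmbOfFin hK).strictMono.comp (Fin.strictMono_succAbove q))) i
  have hne : (insert x J).orderEmbOfFin hK (q.succAbove j) ≠ x :=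
    fun h => Fin.succAbove_ne q j (((insert x J).orderEmbOfFin hK).injective (h.trans hq.symm))
  exact (mem_insert.mp (orderEmbOfFin_mem _ hK _)).resolve_left hne

section Plucker

variable {R ι α : Type*} [CommRing R] [LinearOrder α] {k n : ℕ}

/-- For `#I = k`, the `I`-th coordinate of the wedge `U (s 0) ∧ ⋯ ∧ U (s (k - 1))` of rows of `U`
in the standard basis of the exterior power. -/
def pluckerCoord (U : Matrix ι α R) (s : Fin k → ι) (I : Finset α) : R :=
  if h : #I = k then (U.submatrix s (I.orderEmbOfFin h)).det else 0

lemma pluckerCoord_orderEmbOfFin (U : Matrix α α R) {D S T : Finset α}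
    (hU : ∀ y ∈ D, ∀ x ∈ D, U y x = if y = x then 1 else 0) (hSD : S ⊆ D) (hTD : T ⊆ D)
    (hS : #S = k) : pluckerCoord U (S.orderEmbOfFin hS) T = if S = T then 1 else 0 := by
  by_cases hT : #T = k
  swap
  · rw [pluckerCoord, dif_neg hT, if_neg (by rintro rfl; exact hT hS)]
  rw [pluckerCoord, dif_pos hT]
  split_ifs with hST
  · subst hST
    convert det_one (R := R) (n := Fin k)
    ext a b
    simp [one_apply, hU _ (hSD (orderEmbOfFin_mem _ _ _)) _ (hSD (orderEmbOfFin_mem _ _ _))]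
  · obtain ⟨x, hxT, hxS⟩ := not_subset.mp (show ¬T ⊆ S from
      fun hTS => hST (eq_of_subset_of_card_le hTS (hS.trans hT.symm).le).symm)
    obtain ⟨b, rfl⟩ : x ∈ Set.range (T.orderEmbOfFin hT) := by
      rw [range_orderEmbOfFin]; exact hxT
    refine det_eq_zero_of_column_eq_zero b fun a => ?_
    rw [submatrix_apply, hU _ (hSD (orderEmbOfFin_mem _ _ _)) _ (hTD hxT), if_neg]
    exact fun h => hxS (h ▸ orderEmbOfFin_mem _ _ _)

lemma neg_one_pow_ind_mul_pluckerCoord_insert (U : Matrix ι ℕ R) (s : Fin (n + 1) → ι)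
    {J : Finset ℕ} (hJ : #J = n) {x : ℕ} (hx : x ∉ J) :
    (-1) ^ ind (insert x J) x * pluckerCoord U s (insert x J) =
      -(U.submatrix s (Fin.cons x (J.orderEmbOfFin hJ))).det := by
  have hK : #(insert x J) = n + 1 := by rw [card_insert_of_notMem hx, hJ]
  obtain ⟨q, hq⟩ : x ∈ Set.range ((insert x J).orderEmbOfFin hK) := by
    rw [range_orderEmbOfFin]; exact mem_insert_self x J
  set f := (insert x J).orderEmbOfFin hK
  have hperm : U.submatrix s (f ∘ q.cycleRange.symm) =
      (U.submatrix s f).submatrix id q.cycleRange.symm := rfl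
  rw [pluckerCoord, dif_pos hK, ← orderEmbOfFin_insert_comp_cycleRange_symm hJ hK hq,
    hperm, det_permute', Equiv.Perm.sign_symm, Fin.sign_cycleRange,
    (congrArg (ind (insert x J)) hq).symm.trans (ind_orderEmbOfFin hK q)]
  push_cast
  ring

end Plucker

section RepairMatrix

variable {F : Type*} [Field F] {d n : ℕ}

lemma sum_mul_Xi (ψ : ℕ → F) (f : Finset ℕ → F) (J : ↥((Icc 1 d).powersetCard n)) :
    ∑ I, f I.val * Xi F d (n + 1) ψ I J =
      ∑ x ∈ Icc 1 d \ J, f (insert x J.val) * ((-1) ^ ind (insert x J.val) x * ψ x) := by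
  obtain ⟨hJsub, hJ⟩ := mem_powersetCard.mp J.2
  calc ∑ I, f I.val * Xi F d (n + 1) ψ I J
      = ∑ K ∈ (Icc 1 d).powersetCard (n + 1), ∑ x ∈ Icc 1 d \ J,
          if K = insert x J.val then f K * ((-1) ^ ind K x * ψ x) else 0 := by
        rw [← sum_coe_sort ((Icc 1 d).powersetCard (n + 1))]
        refine sum_congr rfl fun I _ => ?_
        simp only [Xi, mul_sum, mul_ite, mul_zero]
        refine sum_subset (sdiff_subset_sdiff (mem_powersetCard.mp I.2).1 le_rfl)
          fun x hx hxI => if_neg fun hI => ?_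
        exact hxI (mem_sdiff.mpr ⟨hI ▸ mem_insert_self x J, (mem_sdiff.mp hx).2⟩)
    _ = ∑ x ∈ Icc 1 d \ J, ∑ K ∈ (Icc 1 d).powersetCard (n + 1),
          if K = insert x J.val then f K * ((-1) ^ ind K x * ψ x) else 0 := sum_comm
    _ = _ := by
        refine sum_congr rfl fun x hx => ?_
        obtain ⟨hxd, hxJ⟩ := mem_sdiff.mp hx
        rw [sum_ite_eq', if_pos (mem_powersetCard.mpr
          ⟨insert_subset hxd hJsub, by rw [card_insert_of_notMem hxJ, hJ]⟩)]

lemma sum_pluckerCoord_mul_Xi_eq_zero (ψ : ℕ → F) {ι : Type*} (U : Matrix ι ℕ F)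
    (s : Fin (n + 1) → ι) (hU : ∀ a, ∑ x ∈ Icc 1 d, ψ x * U (s a) x = 0)
    (J : ↥((Icc 1 d).powersetCard n)) :
    ∑ I, pluckerCoord U s I.val * Xi F d (n + 1) ψ I J = 0 := by
  obtain ⟨hJsub, hJ⟩ := mem_powersetCard.mp J.2
  have hvanish :
      ∑ x ∈ J.val, ψ x * (U.submatrix s (Fin.cons x (J.val.orderEmbOfFin hJ))).det = 0 :=
    sum_eq_zero fun x hx => by
      rw [det_submatrix_cons_eq_zero_of_mem_range U s (by rwa [range_orderEmbOfFin]), mul_zero]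
  rw [sum_mul_Xi]
  calc ∑ x ∈ Icc 1 d \ J,
        pluckerCoord U s (insert x J.val) * ((-1) ^ ind (insert x J.val) x * ψ x)
      = -∑ x ∈ Icc 1 d \ J, ψ x * (U.submatrix s (Fin.cons x (J.val.orderEmbOfFin hJ))).det := by
        rw [← sum_neg_distrib]
        refine sum_congr rfl fun x hx => ?_
        rw [← mul_neg, ← neg_one_pow_ind_mul_pluckerCoord_insert U s hJ (mem_sdiff.mp hx).2]
        ring
    _ = 0 := by
        rw [sum_sdiff_eq_sub hJsub, sum_mul_det_submatrix_cons_eq_zero U s _ _ ψ hU, hvanish,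
          sub_zero, neg_zero]

end RepairMatrix

section LinearAlgebra

variable {F : Type*} [Field F]

lemma linearIndependent_of_apply_eq_ite {ι κ : Type*} [DecidableEq ι] (v : ι → κ → F)
    (g : ι → κ) (h : ∀ i j, v i (g j) = if i = j then 1 else 0) : LinearIndependent F v := by
  refine LinearIndependent.of_comp (LinearMap.funLeft F F g) ?_
  convert Pi.linearIndependent_single_one ι F with i
  ext j
  simp [LinearMap.funLeft_apply, h, Pi.single_apply, eq_comm]

lemma rank_le_card_sub_card_of_linearIndependent {ι κ m : Type*} [Fintype ι] [Fintype κ]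
    [Fintype m] (A : Matrix m κ F) {v : ι → m → F} (hv : LinearIndependent F v)
    (hA : ∀ i, v i ᵥ* A = 0) : A.rank ≤ Fintype.card m - Fintype.card ι := by
  have hker : ∀ i, v i ∈ LinearMap.ker Aᵀ.mulVecLin := fun i => by
    rw [LinearMap.mem_ker, mulVecLin_apply, mulVec_transpose, hA]
  have hcard : Fintype.card ι ≤ Module.finrank F (LinearMap.ker Aᵀ.mulVecLin) :=
    (LinearIndependent.of_comp (LinearMap.ker _).subtype (v := fun i => ⟨v i, hker i⟩)
      hv).fintype_card_le_finrank
  have hrank := LinearMap.finrank_range_add_finrank_ker Aᵀ.mulVecLin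
  rw [Module.finrank_fintype_fun_eq_card] at hrank
  rw [← rank_transpose, rank]
  omega

lemma exists_spanning_independent_columns {ι α : Type*} [Fintype ι] (Ψ : Matrix ι α F)
    (X : Finset α) : ∃ E ⊆ X, #E ≤ Fintype.card ι ∧
      ∃ c : α → α → F, ∀ y ∈ X, ∑ x ∈ E, c y x • Ψᵀ x = Ψᵀ y := by
  obtain ⟨b, hbX, -, hspan, hli⟩ := exists_linearIndepOn_extension (K := F) (v := Ψᵀ)
    (linearIndepOn_empty F _) (Set.empty_subset (X : Set α))
  obtain ⟨E, rfl⟩ := (X.finite_toSet.subset hbX).exists_finset_coe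
  have hc : ∀ y ∈ X, ∃ c : α → F, ∑ x ∈ E, c x • Ψᵀ x = Ψᵀ y := fun y hy =>
    (Submodule.mem_span_image_finset_iff_exists_fun' F).mp (hspan ⟨y, hy, rfl⟩)
  choose! c hc using hc
  exact ⟨E, by exact_mod_cast hbX, by simpa using hli.fintype_card_le_finrank, c, hc⟩

lemma exists_kernel_vectors_eq_ite {ι α : Type*} [Fintype ι] [DecidableEq α]
    (Ψ : Matrix ι α F) (X : Finset α) :
    ∃ D ⊆ X, #X - Fintype.card ι ≤ #D ∧ ∃ U : Matrix α α F,
      (∀ y ∈ D, ∀ i, ∑ x ∈ X, Ψ i x * U y x = 0) ∧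
      ∀ y ∈ D, ∀ x ∈ D, U y x = if y = x then 1 else 0 := by
  obtain ⟨E, hEX, hEcard, c, hc⟩ := exists_spanning_independent_columns Ψ X
  -- for `y ∉ E`, `U y = e_y - ∑_{x ∈ E} c y x • e_x`
  let U : Matrix α α F := fun y x => if x ∈ E then -c y x else if y = x then 1 else 0
  refine ⟨X \ E, sdiff_subset, by rw [card_sdiff_of_subset hEX]; omega, U, fun y hy i => ?_,
    fun y _ x hx => if_neg (mem_sdiff.mp hx).2⟩
  obtain ⟨hyX, hyE⟩ := mem_sdiff.mp hy
  have hcol : ∑ x ∈ E, c y x * Ψ i x = Ψ i y := by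
    simpa using congrFun (hc y hyX) i
  have hsumE : ∑ x ∈ E, Ψ i x * U y x = -Ψ i y := by
    rw [← hcol, ← sum_neg_distrib]
    exact sum_congr rfl fun x hx => by simp [U, hx, mul_comm]
  have hsumXE : ∑ x ∈ X \ E, Ψ i x * U y x = Ψ i y := by
    have hdelta : ∀ x ∈ X \ E, Ψ i x * U y x = if y = x then Ψ i x else 0 :=
      fun x hx => by simp [U, (mem_sdiff.mp hx).2]
    rw [sum_congr rfl hdelta, sum_ite_eq, if_pos hy]
  rw [← sum_sdiff hEX, hsumXE, hsumE, add_neg_cancel]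

end LinearAlgebra

theorem concatenated_xi_rank_le_general (F : Type*) [Field F] (d m e : ℕ)
    (hm1 : 1 ≤ m)
    (Ψ : Matrix (Fin e) ℕ F) :
    (Matrix.of fun (I : ↥((Finset.Icc 1 d).powersetCard m))
        (c : Fin e × ↥((Finset.Icc 1 d).powersetCard (m - 1))) =>
          Xi F d m (Ψ c.1) I c.2).rank ≤ d.choose m - (d - e).choose m := by
  obtain ⟨n, rfl⟩ : ∃ n, m = n + 1 := ⟨m - 1, by omega⟩
  obtain ⟨D, hDX, hD, U, hUΨ, hUD⟩ := exists_kernel_vectors_eq_ite Ψ (Icc 1 d)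
  rw [Fintype.card_fin, Nat.card_Icc, Nat.add_sub_cancel] at hD
  let rows (S : ↥(D.powersetCard (n + 1))) : Fin (n + 1) → ℕ :=
    S.val.orderEmbOfFin (mem_powersetCard.mp S.2).2
  have hli : LinearIndependent F fun S (I : ↥((Icc 1 d).powersetCard (n + 1))) =>
      pluckerCoord U (rows S) I.val :=
    linearIndependent_of_apply_eq_ite _ (fun S => ⟨S.val, powersetCard_mono hDX S.2⟩)
      fun S T => (pluckerCoord_orderEmbOfFin U hUD (mem_powersetCard.mp S.2).1
          (mem_powersetCard.mp T.2).1 _).trans (if_congr Subtype.ext_iff.symm rfl rfl)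
  calc _ ≤ #((Icc 1 d).powersetCard (n + 1)) - #(D.powersetCard (n + 1)) := by
        simp only [← Fintype.card_coe]
        refine rank_le_card_sub_card_of_linearIndependent _ hli fun S => funext fun c => ?_
        exact sum_pluckerCoord_mul_Xi_eq_zero (Ψ c.1) U (rows S)
          (fun a => hUΨ _ ((mem_powersetCard.mp S.2).1 (orderEmbOfFin_mem _ _ a)) c.1) c.2
    _ ≤ _ := by
        rw [card_powersetCard, card_powersetCard, Nat.card_Icc, Nat.add_sub_cancel]
        exact Nat.sub_le_sub_left (Nat.choose_le_choose _ hD) _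

/-- Repair bandwidth for multiple failures: if the `e × d` matrix `Ψ_E` (with entries
`Ψ i x` for `i ∈ Fin e` and column labels `x ∈ {1,…,d}`) has rank `e`, then the horizontal
concatenation `[Ξ^{ψ^{(1)},m} | … | Ξ^{ψ^{(e)},m}]` of the repair-encoder matrices of its
rows has rank at most `C(d,m) − C(d−e,m)`. -/
theorem concatenated_xi_rank_le (F : Type*) [Field F] (d m e : ℕ) (hd : 1 ≤ d)
    (hm1 : 1 ≤ m) (hmd : m ≤ d) (he1 : 1 ≤ e) (hed : e ≤ d)
    (Ψ : Matrix (Fin e) ℕ F)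
    (hrank : (Matrix.of fun (i : Fin e) (x : ↥(Finset.Icc 1 d)) => Ψ i x.val).rank = e) :
    (Matrix.of fun (I : ↥((Finset.Icc 1 d).powersetCard m))
        (c : Fin e × ↥((Finset.Icc 1 d).powersetCard (m - 1))) =>
          Xi F d m (Ψ c.1) I c.2).rank ≤ d.choose m - (d - e).choose m :=
  concatenated_xi_rank_le_general F d m e hm1 Ψ
end

section
/- (Orthogonality of the null-space matrix.) For every field F, all integers d ≥ 1, 1 ≤ m ≤ d and 1 ≤ e ≤ d, every e × d matrix Ψ_E over F with rows ψ^{(1)},…,ψ^{(e)} ∈ F^d, every e-element subset Q ⊆ {1,…,d}, and every i ∈ {1,…,e}: the matrix product N^{E,m} · Ξ^{ψ^{(i)},m} is the zero matrix, where N^{E,m} is the null-space matrix associated with Ψ_E and Q. -/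
/-- The `e × e` submatrix of `Ψ` formed by the columns with indices in `S`,
listed in increasing order. -/
def subCols {F : Type*} [Field F] {e : ℕ} (Ψ : Matrix (Fin e) ℕ F) (S : Finset ℕ)
    (h : S.card = e) : Matrix (Fin e) (Fin e) F :=
  fun i j => Ψ i (S.orderIsoOfFin h j).val

/-- The null-space matrix `N^{E,m}` associated with `Ψ_E` and `Q`: rows indexed by `m`-element
subsets `I` of `{1,…,d}\Q`, columns indexed by `m`-element subsets `L` of `{1,…,d}`; entry
`(−1)^{Σ_{j∈L} ind(I∪Q, j)} · det(Ψ_E[:, (I∪Q)\L])` if `L ⊆ I∪Q`, and `0` otherwise. -/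
def NMat (F : Type*) [Field F] (d m e : ℕ) (Ψ : Matrix (Fin e) ℕ F) (Q : Finset ℕ) :
    Matrix ↥((Finset.Icc 1 d \ Q).powersetCard m) ↥((Finset.Icc 1 d).powersetCard m) F :=
  fun I L =>
    if h : L.val ⊆ I.val ∪ Q ∧ ((I.val ∪ Q) \ L.val).card = e then
      (-1 : F) ^ (∑ j ∈ L.val, ind (I.val ∪ Q) j) *
        (subCols Ψ ((I.val ∪ Q) \ L.val) h.2).det
    else 0

lemma erase_orderEmbOfFin {T : Finset ℕ} {k : ℕ} (hT : T.card = k + 1) (j : Fin (k + 1))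
    (h' : (T.erase (T.orderEmbOfFin hT j)).card = k) (c : Fin k) :
    (T.erase (T.orderEmbOfFin hT j)).orderEmbOfFin h' c = T.orderEmbOfFin hT (j.succAbove c) := by
  set x := T.orderEmbOfFin hT j with hx
  have hmono : StrictMono (fun c : Fin k => T.orderEmbOfFin hT (j.succAbove c)) :=
    (T.orderEmbOfFin hT).strictMono.comp (Fin.strictMono_succAbove j)
  have hmem : ∀ c : Fin k, T.orderEmbOfFin hT (j.succAbove c) ∈ T.erase x := by
    intro c
    refine Finset.mem_erase.2 ⟨?_, Finset.orderEmbOfFin_mem _ _ _⟩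
    intro h
    exact Fin.succAbove_ne j c ((T.orderEmbOfFin hT).injective h)
  have := Finset.orderEmbOfFin_unique h' hmem hmono
  exact (congrFun this c).symm

lemma ind_orderEmbOfFin_s8 {T : Finset ℕ} {k : ℕ} (hT : T.card = k + 1) (j : Fin (k + 1)) :
    ind T (T.orderEmbOfFin hT j) = (j : ℕ) + 1 := by
  set x := T.orderEmbOfFin hT j with hx
  have himg : T.filter (fun y => y ≤ x) = (Finset.Iic j).image (T.orderEmbOfFin hT) := by
    ext y
    simp only [Finset.mem_filter, Finset.mem_image, Finset.mem_Iic]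
    constructor
    · rintro ⟨hyT, hyx⟩
      obtain ⟨k', hk'⟩ : ∃ k', T.orderEmbOfFin hT k' = y := by
        have := Finset.range_orderEmbOfFin T hT
        rw [Set.range_eq_iff] at this
        obtain ⟨-, h2⟩ := this
        exact h2 y hyT
      refine ⟨k', ?_, hk'⟩
      rw [← hk'] at hyx
      exact ((T.orderEmbOfFin hT).strictMono.le_iff_le).1 hyx
    · rintro ⟨k', hk', rfl⟩
      exact ⟨Finset.orderEmbOfFin_mem _ _ _,
        ((T.orderEmbOfFin hT).strictMono.le_iff_le).2 hk'⟩
  unfold ind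
  rw [himg, Finset.card_image_of_injective _ (T.orderEmbOfFin hT).injective, Fin.card_Iic]

lemma subCols_congr {F : Type*} [Field F] {e : ℕ} (Ψ : Matrix (Fin e) ℕ F)
    {A B : Finset ℕ} (hAB : A = B) (hA : A.card = e) (hB : B.card = e) :
    subCols Ψ A hA = subCols Ψ B hB := by subst hAB; rfl


/-- Orthogonality of the null-space matrix: `N^{E,m} · Ξ^{ψ^{(i)},m} = 0` for every row
`ψ^{(i)}` of `Ψ_E`. -/
theorem nmat_mul_xi_eq_zero (F : Type*) [Field F] (d m e : ℕ) (hd : 1 ≤ d) (hm1 : 1 ≤ m)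
    (hmd : m ≤ d) (he1 : 1 ≤ e) (hed : e ≤ d)
    (Ψ : Matrix (Fin e) ℕ F) (Q : Finset ℕ) (hQsub : Q ⊆ Finset.Icc 1 d) (hQcard : Q.card = e)
    (i : Fin e) :
    NMat F d m e Ψ Q * Xi F d m (Ψ i) = 0 := by
  classical
  ext I J
  rw [Matrix.mul_apply, Matrix.zero_apply]
  obtain ⟨hIsub, hIcard⟩ := Finset.mem_powersetCard.1 I.2
  obtain ⟨hJsub, hJcard⟩ := Finset.mem_powersetCard.1 J.2
  set S : Finset ℕ := I.val ∪ Q with hSdef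
  set P : Finset (Finset ℕ) := (Finset.Icc 1 d).powersetCard m with hPdef
  set D : Finset ℕ := Finset.Icc 1 d \ J.val with hDdef
  set nn : Finset ℕ → F := fun L =>
    if h : L ⊆ S ∧ ((S \ L).card = e) then
      (-1 : F) ^ (∑ j ∈ L, ind S j) * (subCols Ψ (S \ L) h.2).det
    else 0 with hnndef
  set cc : Finset ℕ → ℕ → F := fun L x => (-1 : F) ^ (ind L x) * Ψ i x with hccdef
  have step1 : (∑ L : ↥P, NMat F d m e Ψ Q I L * Xi F d m (Ψ i) L J)
      = ∑ L ∈ P, nn L * ∑ x ∈ L \ J.val, (if L = insert x J.val then cc L x else 0) := by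
    rw [← Finset.sum_coe_sort P
      (fun L => nn L * ∑ x ∈ L \ J.val, (if L = insert x J.val then cc L x else 0))]
    rfl
  rw [step1]
  have step2 : ∀ L ∈ P, nn L * (∑ x ∈ L \ J.val, if L = insert x J.val then cc L x else 0)
      = ∑ x ∈ D, (if L = insert x J.val then nn L * cc L x else 0) := by
    intro L hL
    obtain ⟨hLsub, hLcard⟩ := Finset.mem_powersetCard.1 hL
    have hsub : L \ J.val ⊆ D := by
      intro x hx
      rw [Finset.mem_sdiff] at hx ⊢
      exact ⟨hLsub hx.1, hx.2⟩
    have hzero : ∀ x ∈ D, x ∉ L \ J.val →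
        (if L = insert x J.val then nn L * cc L x else 0) = 0 := by
      intro x hxD hxn
      rw [if_neg]
      intro hLx
      apply hxn
      rw [Finset.mem_sdiff] at hxD ⊢
      exact ⟨hLx ▸ Finset.mem_insert_self x J.val, hxD.2⟩
    rw [Finset.mul_sum]
    simp_rw [mul_ite, mul_zero]
    exact Finset.sum_subset hsub hzero
  rw [Finset.sum_congr rfl step2, Finset.sum_comm]
  have hPmem : ∀ x ∈ D, insert x J.val ∈ P := by
    intro x hx
    rw [hDdef, Finset.mem_sdiff] at hx
    rw [hPdef, Finset.mem_powersetCard]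
    refine ⟨Finset.insert_subset hx.1 hJsub, ?_⟩
    rw [Finset.card_insert_of_notMem hx.2, hJcard]
    omega
  have step4 : ∀ x ∈ D, (∑ L ∈ P, if L = insert x J.val then nn L * cc L x else 0)
      = nn (insert x J.val) * cc (insert x J.val) x := by
    intro x hx
    rw [Finset.sum_ite_eq' P (insert x J.val) (fun L => nn L * cc L x), if_pos (hPmem x hx)]
  rw [Finset.sum_congr rfl step4]
  by_cases hJS : J.val ⊆ S
  · -- main case
    have hdisj : Disjoint I.val Q := by
      rw [Finset.disjoint_left]; intro a ha haQ
      exact (Finset.mem_sdiff.1 (hIsub ha)).2 haQ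
    have hScard : S.card = m + e := by
      rw [hSdef, Finset.card_union_of_disjoint hdisj, hIcard, hQcard]
    have hSsub : S ⊆ Finset.Icc 1 d :=
      Finset.union_subset (fun a ha => (Finset.mem_sdiff.1 (hIsub ha)).1) hQsub
    set T : Finset ℕ := S \ J.val with hTdef
    have hTcard : T.card = e + 1 := by
      rw [hTdef, Finset.card_sdiff_of_subset hJS, hScard, hJcard]; omega
    have hTD : T ⊆ D := by
      intro x hx
      rw [hTdef, Finset.mem_sdiff] at hx
      rw [hDdef, Finset.mem_sdiff]
      exact ⟨hSsub hx.1, hx.2⟩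
    have hzero2 : ∀ x ∈ D, x ∉ T → nn (insert x J.val) * cc (insert x J.val) x = 0 := by
      intro x hxD hxT
      have hxS : x ∉ S := by
        intro hxS
        exact hxT (Finset.mem_sdiff.2 ⟨hxS, (Finset.mem_sdiff.1 hxD).2⟩)
      have hnz : nn (insert x J.val) = 0 := by
        rw [hnndef]
        simp only
        rw [dif_neg]
        rintro ⟨h1, h2⟩
        exact hxS (h1 (Finset.mem_insert_self x _))
      rw [hnz, zero_mul]
    rw [← Finset.sum_subset hTD hzero2]
    set C : ℕ := ∑ j ∈ J.val, ind S j with hCdef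
    set q : ℕ → F := fun x =>
      if h : (T.erase x).card = e then (subCols Ψ (T.erase x) h).det else 0 with hqdef
    have hterm : ∀ x ∈ T, nn (insert x J.val) * cc (insert x J.val) x
        = (-1 : F) ^ (C + 1) * ((-1 : F) ^ (ind T x) * (Ψ i x * q x)) := by
      intro x hxT
      obtain ⟨hxS, hxJ⟩ := Finset.mem_sdiff.1 hxT
      have hins_sub : insert x J.val ⊆ S := Finset.insert_subset hxS hJS
      have hins_card : (insert x J.val).card = m := by
        rw [Finset.card_insert_of_notMem hxJ, hJcard]; omega
      have hsd_card : ((S \ insert x J.val)).card = e := by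
        rw [Finset.card_sdiff_of_subset hins_sub, hScard, hins_card]; omega
      have hset : S \ insert x J.val = T.erase x := by
        ext y
        simp only [hTdef, Finset.mem_sdiff, Finset.mem_insert, Finset.mem_erase]
        tauto
      have herase_card : (T.erase x).card = e := by rw [← hset]; exact hsd_card
      have hq : q x = (subCols Ψ (S \ insert x J.val) hsd_card).det := by
        rw [hqdef]
        simp only
        rw [dif_pos herase_card]
        rw [subCols_congr Ψ hset hsd_card herase_card]
      have hsum_ins : ∑ j ∈ insert x J.val, ind S j = ind S x + C := by
        rw [Finset.sum_insert hxJ]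
      have hindS : ind S x = ind J.val x + ind T x := by
        unfold ind
        rw [← Finset.card_union_of_disjoint
          (Finset.disjoint_filter_filter Finset.disjoint_sdiff),
          ← Finset.filter_union, Finset.union_sdiff_of_subset hJS]
      have hind_ins : ind (insert x J.val) x = ind J.val x + 1 := by
        unfold ind
        rw [Finset.filter_insert, if_pos (le_refl x),
          Finset.card_insert_of_notMem (fun h => hxJ (Finset.mem_filter.1 h).1)]
      rw [hnndef, hccdef]
      simp only
      rw [dif_pos ⟨hins_sub, hsd_card⟩, hsum_ins, hindS, hind_ins, ← hq]
      have hpow : ((-1 : F)) ^ (ind J.val x + ind T x + C) * ((-1 : F)) ^ (ind J.val x + 1)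
          = (-1 : F) ^ (C + 1) * (-1 : F) ^ (ind T x) := by
        rw [← pow_add, ← pow_add]
        rw [show ind J.val x + ind T x + C + (ind J.val x + 1)
            = C + 1 + ind T x + 2 * ind J.val x by ring]
        rw [pow_add, pow_mul, neg_one_sq, one_pow, mul_one]
      calc ((-1 : F) ^ (ind J.val x + ind T x + C) * q x)
            * ((-1 : F) ^ (ind J.val x + 1) * Ψ i x)
          = ((-1 : F) ^ (ind J.val x + ind T x + C) * (-1 : F) ^ (ind J.val x + 1))
            * (q x * Ψ i x) := by ring
        _ = ((-1 : F) ^ (C + 1) * (-1 : F) ^ (ind T x)) * (q x * Ψ i x) := by rw [hpow]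
        _ = (-1 : F) ^ (C + 1) * ((-1 : F) ^ (ind T x) * (Ψ i x * q x)) := by ring
    rw [Finset.sum_congr rfl hterm, ← Finset.mul_sum]
    -- now show the inner sum is zero via determinant with repeated row
    set σ : Fin (e + 1) → ℕ := fun j => T.orderEmbOfFin hTcard j with hσdef
    set M : Matrix (Fin (e + 1)) (Fin (e + 1)) F :=
      fun r c' => if hr : r = 0 then Ψ i (σ c') else Ψ (r.pred hr) (σ c') with hMdef
    have hM0 : ∀ c', M 0 c' = Ψ i (σ c') := fun c' => by rw [hMdef]; simp
    have hMsucc : ∀ (r : Fin e) (c' : Fin (e + 1)), M r.succ c' = Ψ r (σ c') := by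
      intro r c'
      rw [hMdef]
      simp only
      rw [dif_neg (Fin.succ_ne_zero r), Fin.pred_succ]
    have hdet0 : M.det = 0 := by
      refine Matrix.det_zero_of_row_eq (i := 0) (j := i.succ) (Fin.succ_ne_zero i).symm ?_
      funext c'
      rw [hM0, hMsucc]
    have hsurj : ∀ x ∈ T, ∃ j, σ j = x := by
      intro y hy
      have hrange := Finset.range_orderEmbOfFin T hTcard
      have hy2 : y ∈ Set.range (T.orderEmbOfFin hTcard) := by rw [hrange]; exact_mod_cast hy
      obtain ⟨j, hj⟩ := hy2
      exact ⟨j, hj⟩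
    have hsum : ∑ j ∈ Finset.univ, ((-1 : F) ^ ind T (σ j) * (Ψ i (σ j) * q (σ j)))
        = ∑ x ∈ T, ((-1 : F) ^ ind T x * (Ψ i x * q x)) := by
      refine Finset.sum_bij (fun j _ => σ j) (fun j _ => Finset.orderEmbOfFin_mem _ _ _)
        (fun a _ b _ hab => (T.orderEmbOfFin hTcard).injective hab) (fun x hx => ?_)
        (fun j _ => rfl)
      obtain ⟨j, hj⟩ := hsurj x hx
      exact ⟨j, Finset.mem_univ j, hj⟩
    rw [← hsum]
    have hterm2 : ∀ j : Fin (e + 1),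
        (-1 : F) ^ (ind T (σ j)) * (Ψ i (σ j) * q (σ j))
        = -((-1 : F) ^ (j : ℕ) * M 0 j * (M.submatrix Fin.succ j.succAbove).det) := by
      intro j
      have hec : (T.erase (σ j)).card = e := by
        rw [Finset.card_erase_of_mem (Finset.orderEmbOfFin_mem _ _ _), hTcard]
        omega
      have hqj : q (σ j) = (M.submatrix Fin.succ j.succAbove).det := by
        rw [hqdef]
        simp only
        rw [dif_pos hec]
        congr 1
        ext r c'
        show Ψ r ((T.erase (σ j)).orderIsoOfFin hec c').val = M r.succ (j.succAbove c')
        rw [hMsucc]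
        congr 1
        have := erase_orderEmbOfFin hTcard j hec c'
        rw [Finset.coe_orderIsoOfFin_apply]
        exact this
      rw [hqj, hM0, ind_orderEmbOfFin_s8 hTcard j, pow_succ]
      ring
    rw [Finset.sum_congr rfl (fun j _ => hterm2 j)]
    rw [Finset.sum_neg_distrib, ← Matrix.det_succ_row_zero, hdet0, neg_zero, mul_zero]
  · -- J ⊄ S : every term vanishes
    refine Finset.sum_eq_zero (fun x hx => ?_)
    have hnz : nn (insert x J.val) = 0 := by
      rw [hnndef]
      simp only
      rw [dif_neg]
      rintro ⟨h1, h2⟩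
      exact hJS (fun y hy => h1 (Finset.mem_insert_of_mem hy))
    rw [hnz, zero_mul]
end

section
/- (Full-rankness of the null-space matrix.) For every field F, all integers d ≥ 1, 1 ≤ m ≤ d and 1 ≤ e ≤ d, every e × d matrix Ψ_E over F, and every e-element subset Q ⊆ {1,…,d} such that det(Ψ_E[:, Q]) ≠ 0: the null-space matrix N^{E,m} associated with Ψ_E and Q has rank equal to C(d−e, m), the number of its rows. In particular, its square submatrix on the columns L ⊆ {1,…,d}\Q is diagonal with every diagonal entry equal to ± det(Ψ_E[:, Q]): namely N^{E,m}_{I,L} = 0 whenever L ⊆ {1,…,d}\Q and L ≠ I, and N^{E,m}_{I,I} = (−1)^{Σ_{i∈I} ind(I∪Q, i)} det(Ψ_E[:, Q]). -/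
lemma subCols_det_congr {F : Type*} [Field F] {e : ℕ} (Ψ : Matrix (Fin e) ℕ F) {S T : Finset ℕ}
    (hST : S = T) (hS : S.card = e) (hT : T.card = e) :
    (subCols Ψ S hS).det = (subCols Ψ T hT).det := by subst hST; rfl
/-- Full-rankness of the null-space matrix: if `det(Ψ_E[:, Q]) ≠ 0` then `N^{E,m}` has rank
`C(d−e, m)` (the number of its rows); moreover its square submatrix on columns
`L ⊆ {1,…,d}\Q` is diagonal: `N^{E,m}_{I,L} = 0` when `L ⊆ {1,…,d}\Q` with `L ≠ I`, and
`N^{E,m}_{I,I} = (−1)^{Σ_{i∈I} ind(I∪Q,i)} det(Ψ_E[:, Q])`. -/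
theorem nmat_full_rank (F : Type*) [Field F] (d m e : ℕ) (hd : 1 ≤ d) (hm1 : 1 ≤ m)
    (hmd : m ≤ d) (he1 : 1 ≤ e) (hed : e ≤ d)
    (Ψ : Matrix (Fin e) ℕ F) (Q : Finset ℕ) (hQsub : Q ⊆ Finset.Icc 1 d) (hQcard : Q.card = e)
    (hdet : (subCols Ψ Q hQcard).det ≠ 0) :
    (NMat F d m e Ψ Q).rank = (d - e).choose m ∧
    (∀ (I : ↥((Finset.Icc 1 d \ Q).powersetCard m))
        (L : ↥((Finset.Icc 1 d).powersetCard m)),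
        L.val ⊆ Finset.Icc 1 d \ Q → L.val ≠ I.val → NMat F d m e Ψ Q I L = 0) ∧
    (∀ (I : ↥((Finset.Icc 1 d \ Q).powersetCard m))
        (L : ↥((Finset.Icc 1 d).powersetCard m)), L.val = I.val →
        NMat F d m e Ψ Q I L =
          (-1 : F) ^ (∑ j ∈ I.val, ind (I.val ∪ Q) j) * (subCols Ψ Q hQcard).det) := by
  classical
  have hIccd : (Finset.Icc 1 d).card = d := by simp
  have hsd : (Finset.Icc 1 d \ Q).card = d - e := by
    rw [Finset.card_sdiff_of_subset hQsub, hIccd, hQcard]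
  -- off-diagonal zero
  have hdiag0 : ∀ (I : ↥((Finset.Icc 1 d \ Q).powersetCard m))
      (L : ↥((Finset.Icc 1 d).powersetCard m)),
      L.val ⊆ Finset.Icc 1 d \ Q → L.val ≠ I.val → NMat F d m e Ψ Q I L = 0 := by
    intro I L hLsub hLne
    have hI := Finset.mem_powersetCard.mp I.2
    have hL := Finset.mem_powersetCard.mp L.2
    unfold NMat
    rw [dif_neg]
    rintro ⟨hsub, -⟩
    apply hLne
    apply Finset.eq_of_subset_of_card_le
    · intro a ha
      rcases Finset.mem_union.mp (hsub ha) with h | h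
      · exact h
      · exact absurd h (Finset.mem_sdiff.mp (hLsub ha)).2
    · rw [hI.2, hL.2]
  -- diagonal value
  have hdiag1 : ∀ (I : ↥((Finset.Icc 1 d \ Q).powersetCard m))
      (L : ↥((Finset.Icc 1 d).powersetCard m)), L.val = I.val →
      NMat F d m e Ψ Q I L =
        (-1 : F) ^ (∑ j ∈ I.val, ind (I.val ∪ Q) j) * (subCols Ψ Q hQcard).det := by
    intro I L hLI
    have hI := Finset.mem_powersetCard.mp I.2
    have hdisj : Disjoint I.val Q := by
      rw [Finset.disjoint_left]
      intro a ha
      exact (Finset.mem_sdiff.mp (hI.1 ha)).2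
    have hQ' : (I.val ∪ Q) \ I.val = Q := Finset.union_sdiff_cancel_left hdisj
    have hcond : L.val ⊆ I.val ∪ Q ∧ ((I.val ∪ Q) \ L.val).card = e := by
      rw [hLI]
      exact ⟨Finset.subset_union_left, by rw [hQ', hQcard]⟩
    unfold NMat
    rw [dif_pos hcond, subCols_det_congr Ψ (by rw [hLI, hQ']) hcond.2 hQcard, hLI]
  refine ⟨?_, hdiag0, hdiag1⟩
  -- rank computation
  have hmemC : ∀ I : ↥((Finset.Icc 1 d \ Q).powersetCard m),
      I.val ∈ (Finset.Icc 1 d).powersetCard m := by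
    intro I
    have hI := Finset.mem_powersetCard.mp I.2
    exact Finset.mem_powersetCard.mpr ⟨hI.1.trans (Finset.sdiff_subset), hI.2⟩
  set g : ↥((Finset.Icc 1 d \ Q).powersetCard m) → ↥((Finset.Icc 1 d).powersetCard m) :=
    fun I => ⟨I.val, hmemC I⟩ with hg
  set c : ↥((Finset.Icc 1 d \ Q).powersetCard m) → F :=
    fun I => (-1 : F) ^ (∑ j ∈ I.val, ind (I.val ∪ Q) j) * (subCols Ψ Q hQcard).det with hc
  set P : Matrix ↥((Finset.Icc 1 d).powersetCard m) ↥((Finset.Icc 1 d \ Q).powersetCard m) F :=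
    fun L I' => if L = g I' then 1 else 0 with hP
  have hMP : NMat F d m e Ψ Q * P = Matrix.diagonal c := by
    ext I I'
    rw [Matrix.mul_apply]
    simp only [hP, mul_ite, mul_one, mul_zero]
    rw [Finset.sum_ite_eq' Finset.univ (g I') (fun L => NMat F d m e Ψ Q I L)]
    simp only [Finset.mem_univ, if_true]
    by_cases h : I = I'
    · subst h
      rw [hdiag1 I (g I) rfl, Matrix.diagonal_apply_eq]
    · rw [Matrix.diagonal_apply_ne _ h, hdiag0 I (g I')]
      · exact (Finset.mem_powersetCard.mp I'.2).1
      · exact fun hv => h (Subtype.ext hv.symm : I = I')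
  have hcdet : IsUnit (Matrix.diagonal c).det := by
    rw [Matrix.det_diagonal, isUnit_iff_ne_zero]
    apply Finset.prod_ne_zero_iff.mpr
    intro I _
    exact mul_ne_zero (pow_ne_zero _ (neg_ne_zero.mpr one_ne_zero)) hdet
  have hrank_le := Matrix.rank_mul_le_left (NMat F d m e Ψ Q) P
  rw [hMP, Matrix.rank_of_isUnit _ ((Matrix.isUnit_iff_isUnit_det _).mpr hcdet)] at hrank_le
  have h2 := Matrix.rank_le_card_height (NMat F d m e Ψ Q)
  have hcard : Fintype.card ↥((Finset.Icc 1 d \ Q).powersetCard m) = (d - e).choose m := by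
    rw [Fintype.card_coe, Finset.card_powersetCard, hsd]
  exact le_antisymm (h2.trans_eq hcard) (hcard ▸ hrank_le)
end

section
/- (Total bandwidth for centralized repair of multiple failures.) For all natural numbers d, m, e with 1 ≤ m ≤ d and 1 ≤ e ≤ d, the following identity of integers holds: Σ_{j=1}^{e} (C(d,m) − C(d−j,m)) + (d−e)·(C(d,m) − C(d−e,m)) = m·(C(d+1,m+1) − C(d−e+1,m+1)). -/
lemma key_step (k m : ℕ) (hk : 1 ≤ k) (hm : 1 ≤ m) :
    (k : ℤ) * ((k.choose m : ℤ) - ((k - 1).choose m : ℤ)) =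
      (m : ℤ) * (((k + 1).choose (m + 1) : ℤ) - (k.choose (m + 1) : ℤ)) := by
  obtain ⟨a, rfl⟩ : ∃ a, k = a + 1 := ⟨k - 1, (Nat.succ_pred_eq_of_pos hk).symm⟩
  obtain ⟨b, rfl⟩ : ∃ b, m = b + 1 := ⟨m - 1, (Nat.succ_pred_eq_of_pos hm).symm⟩
  have h1 : (a + 1).choose (b + 1) = a.choose b + a.choose (b + 1) :=
    Nat.choose_succ_succ a b
  have h2 : (a + 1 + 1).choose (b + 1 + 1) = (a+1).choose (b+1) + (a+1).choose (b+1+1) :=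
    Nat.choose_succ_succ (a+1) (b+1)
  have h3 : (a + 1) * a.choose b = (a + 1).choose (b + 1) * (b + 1) :=
    Nat.add_one_mul_choose_eq a b
  simp only [Nat.add_sub_cancel]
  push_cast [h1, h2]
  have h3' : ((a:ℤ) + 1) * a.choose b = (a + 1).choose (b + 1) * (b + 1) := by
    exact_mod_cast h3
  push_cast [h1] at h3'
  ring_nf
  ring_nf at h3'
  linarith

/-- Total bandwidth for centralized repair of multiple failures:
`Σ_{j=1}^{e} (C(d,m) − C(d−j,m)) + (d−e)·(C(d,m) − C(d−e,m))
  = m·(C(d+1,m+1) − C(d−e+1,m+1))` as integers. -/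
theorem total_centralized_repair_bandwidth (d m e : ℕ) (hm1 : 1 ≤ m) (hmd : m ≤ d)
    (he1 : 1 ≤ e) (hed : e ≤ d) :
    (∑ j ∈ Finset.Icc 1 e, ((d.choose m : ℤ) - ((d - j).choose m : ℤ))) +
        ((d : ℤ) - (e : ℤ)) * ((d.choose m : ℤ) - ((d - e).choose m : ℤ)) =
      (m : ℤ) * (((d + 1).choose (m + 1) : ℤ) - ((d - e + 1).choose (m + 1) : ℤ)) := by
  clear he1
  induction e with
  | zero => simp
  | succ e ih =>
    have hed' : e ≤ d := Nat.le_of_succ_le hed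
    have ih := ih hed'
    rw [Finset.sum_Icc_succ_top (by omega : 1 ≤ e + 1)]
    set k := d - e with hkdef
    have hk1 : 1 ≤ k := by omega
    have hde1 : d - (e + 1) = k - 1 := by omega
    have hcast : ((d : ℤ) - (e + 1 : ℕ)) = (k : ℤ) - 1 := by
      push_cast; omega
    have hcast2 : ((d : ℤ) - (e : ℕ)) = (k : ℤ) := by push_cast; omega
    rw [hde1, hcast]  -- may need push_cast
    rw [hcast2] at ih
    have hk1' : k - 1 + 1 = k := by omega
    have key := key_step k m hk1 hm1
    have hde1' : d - e + 1 = k + 1 := by omega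
    rw [hde1'] at ih
    have : ((k - 1 : ℕ) + 1 : ℕ) = k := by omega
    rw [this]
    linarith
end
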